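/- arXiv:1503.01328 — 2 statements merged into one kernel-verified Lean document; each statement's English description precedes it below -/
import Mathlib

section
/- For all real constants a > 0 and b ∈ ℝ, (1/(2√π)) ∫_{λ₁≤λ₂} e^{-λ₁²/2} e^{-a(λ₂-b)²} (λ₂-λ₁) dλ₁ dλ₂ = (√(4a+2)/(4a)) e^{-a b²/(2a+1)} + (b√π/√(2a)) Φ( b√(2a)/√(2a+1) ). -/
/-!
Integrating out `λ₁` first gives `∫_{t ≤ y} e^{-t²/2} (y - t) dt = √(2π) (y Φ(y) + φ(y))`,
with `φ` the standard normal density. Writing `y = b + (y - b)`, the outer integral against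
`e^{-a(y-b)²}` splits into three pieces: `∫ φ(y) e^{-a(y-b)²} dy`, computed by completing the
square; `∫ Φ(y) (y - b) e^{-a(y-b)²} dy`, which integration by parts reduces to the first one; and
`J(b) = ∫ Φ(y) e^{-a(y-b)²} dy`. After the shift `y ↦ y + b`, `J` can be differentiated under the
integral sign, and `J'(b)` is again the first piece, `(2a+1)^{-1/2} e^{-ab²/(2a+1)}`. This is also
the derivative of `√(π/a) Φ(b √(2a) / √(2a+1))`, and both functions vanish as `b → -∞`.
-/

open MeasureTheory Real

/-- Standard normal cumulative distribution function. -/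
noncomputable def Phi (x : ℝ) : ℝ :=
  ∫ t in Set.Iic x, (Real.sqrt (2 * Real.pi))⁻¹ * Real.exp (-(t ^ 2) / 2)

open Filter Set ProbabilityTheory Topology

section GaussianIntegrals

lemma integral_exp_neg_mul_sub_sq (c d : ℝ) : ∫ x, exp (-c * (x - d) ^ 2) = √(π / c) := by
  rw [integral_sub_right_eq_self (fun x ↦ exp (-c * x ^ 2)) d, integral_gaussian]

lemma exp_neg_mul_sq_mul_exp_neg_mul_sub_sq {p q : ℝ} (hpq : p + q ≠ 0) (b y : ℝ) :
    exp (-p * y ^ 2) * exp (-q * (y - b) ^ 2) =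
      exp (-(p * q / (p + q)) * b ^ 2) * exp (-(p + q) * (y - q * b / (p + q)) ^ 2) := by
  rw [← exp_add, ← exp_add]
  congr 1
  field_simp
  ring

lemma integrable_exp_neg_mul_sq_mul_exp_neg_mul_sub_sq {p q : ℝ} (hpq : 0 < p + q) (b : ℝ) :
    Integrable fun y ↦ exp (-p * y ^ 2) * exp (-q * (y - b) ^ 2) := by
  simp_rw [exp_neg_mul_sq_mul_exp_neg_mul_sub_sq hpq.ne']
  exact ((integrable_exp_neg_mul_sq hpq).comp_sub_right _).const_mul _

lemma integral_exp_neg_mul_sq_mul_exp_neg_mul_sub_sq {p q : ℝ} (hpq : 0 < p + q) (b : ℝ) :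
    ∫ y, exp (-p * y ^ 2) * exp (-q * (y - b) ^ 2) =
      √(π / (p + q)) * exp (-(p * q / (p + q)) * b ^ 2) := by
  simp_rw [exp_neg_mul_sq_mul_exp_neg_mul_sub_sq hpq.ne']
  rw [integral_const_mul, integral_exp_neg_mul_sub_sq, mul_comm]

lemma exp_neg_sq_div_two (t : ℝ) : exp (-(t ^ 2) / 2) = exp (-(1 / 2) * t ^ 2) := by
  ring_nf

lemma integrable_exp_neg_sq_div_two : Integrable fun t : ℝ ↦ exp (-(t ^ 2) / 2) := by
  simpa only [exp_neg_sq_div_two] using integrable_exp_neg_mul_sq (b := 1 / 2) (by norm_num)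

lemma integrable_mul_exp_neg_sq_div_two : Integrable fun t : ℝ ↦ t * exp (-(t ^ 2) / 2) := by
  simpa only [exp_neg_sq_div_two] using integrable_mul_exp_neg_mul_sq (b := 1 / 2) (by norm_num)

end GaussianIntegrals

section StandardNormal

lemma gaussianPDFReal_zero_one (x : ℝ) :
    gaussianPDFReal 0 1 x = (√(2 * π))⁻¹ * exp (-(x ^ 2) / 2) := by
  simp [gaussianPDFReal]

lemma gaussianPDFReal_zero_one_le_one (x : ℝ) : gaussianPDFReal 0 1 x ≤ 1 := by
  rw [gaussianPDFReal_zero_one]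
  have h2π : 1 ≤ √(2 * π) := one_le_sqrt.2 (by linarith [pi_gt_three])
  exact mul_le_one₀ (inv_le_one_of_one_le₀ h2π) (exp_nonneg _)
    (exp_le_one_iff.2 (by nlinarith [sq_nonneg x]))

lemma continuous_gaussianPDFReal_zero_one : Continuous (gaussianPDFReal 0 1) := by
  rw [gaussianPDFReal_def]
  fun_prop

lemma Phi_eq_cdf : Phi = cdf (gaussianReal 0 1) := by
  ext x
  rw [cdf_eq_real, measureReal_def, gaussianReal_apply_eq_integral _ one_ne_zero,
    ENNReal.toReal_ofReal (setIntegral_nonneg measurableSet_Iic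
      fun t _ ↦ gaussianPDFReal_nonneg 0 1 t)]
  simp only [Phi, gaussianPDFReal_zero_one]

lemma Phi_nonneg (x : ℝ) : 0 ≤ Phi x := Phi_eq_cdf ▸ cdf_nonneg _ x

lemma Phi_le_one (x : ℝ) : Phi x ≤ 1 := Phi_eq_cdf ▸ cdf_le_one _ x

lemma tendsto_Phi_atBot : Tendsto Phi atBot (𝓝 0) := Phi_eq_cdf ▸ tendsto_cdf_atBot _

lemma hasDerivAt_Phi (x : ℝ) : HasDerivAt Phi (gaussianPDFReal 0 1 x) x := by
  have hint := integrable_gaussianPDFReal 0 1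
  have hcont := continuous_gaussianPDFReal_zero_one
  have hPhi : ∀ y, Phi y = Phi 0 + ∫ t in (0 : ℝ)..y, gaussianPDFReal 0 1 t := by
    intro y
    simp only [Phi, ← gaussianPDFReal_zero_one]
    rw [← intervalIntegral.integral_Iic_sub_Iic hint.integrableOn hint.integrableOn]
    ring
  rw [funext hPhi]
  exact (intervalIntegral.integral_hasDerivAt_right hint.intervalIntegrable
    (hcont.stronglyMeasurableAtFilter _ _) hcont.continuousAt).const_add _

lemma continuous_Phi : Continuous Phi :=
  continuous_iff_continuousAt.2 fun x ↦ (hasDerivAt_Phi x).continuousAt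

lemma integrable_Phi_add_mul {g : ℝ → ℝ} (hg : Integrable g) (c : ℝ) :
    Integrable fun y ↦ Phi (y + c) * g y :=
  hg.bdd_mul (continuous_Phi.comp (continuous_add_const c)).aestronglyMeasurable (c := 1) <|
    ae_of_all _ fun y ↦ by
      rw [norm_of_nonneg (Phi_nonneg _)]
      exact Phi_le_one _

lemma integrable_Phi_mul {g : ℝ → ℝ} (hg : Integrable g) : Integrable fun y ↦ Phi y * g y := by
  simpa using integrable_Phi_add_mul hg 0

lemma integral_Iic_exp_neg_sq_div_two (x : ℝ) :
    ∫ t in Iic x, exp (-(t ^ 2) / 2) = √(2 * π) * Phi x := by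
  rw [Phi, integral_const_mul, mul_inv_cancel_left₀ (by positivity)]

lemma integral_Iic_mul_exp_neg_sq_div_two (x : ℝ) :
    ∫ t in Iic x, t * exp (-(t ^ 2) / 2) = -exp (-(x ^ 2) / 2) := by
  have hderiv : ∀ t, HasDerivAt (fun t ↦ -exp (-(t ^ 2) / 2)) (t * exp (-(t ^ 2) / 2)) t :=
    fun t ↦ (((hasDerivAt_pow 2 t).fun_neg.div_const 2).exp).fun_neg.congr_deriv (by ring)
  have hint := integrable_mul_exp_neg_sq_div_two.integrableOn (s := Iic x)
  have hlim := tendsto_zero_of_hasDerivAt_of_integrableOn_Iic (fun t _ ↦ hderiv t) hint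
    integrable_exp_neg_sq_div_two.fun_neg.integrableOn
  simpa using integral_Iic_of_hasDerivAt_of_tendsto' (fun t _ ↦ hderiv t) hint hlim

lemma integral_Iic_exp_neg_sq_div_two_mul_sub (y : ℝ) :
    ∫ t in Iic y, exp (-(t ^ 2) / 2) * (y - t) =
      √(2 * π) * (y * Phi y + gaussianPDFReal 0 1 y) := by
  simp_rw [mul_sub, mul_comm (exp _) y, mul_comm (exp _) (_ : ℝ)]
  rw [integral_sub (integrable_exp_neg_sq_div_two.const_mul y).integrableOn
    integrable_mul_exp_neg_sq_div_two.integrableOn, integral_const_mul,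
    integral_Iic_exp_neg_sq_div_two, integral_Iic_mul_exp_neg_sq_div_two,
    gaussianPDFReal_zero_one, mul_add, mul_inv_cancel_left₀ (by positivity)]
  ring

end StandardNormal

lemma eq_of_hasDerivAt_of_tendsto_atBot {E : Type*} [NormedAddCommGroup E] [NormedSpace ℝ E]
    {f g f' : ℝ → E} {l : E} (hf : ∀ x, HasDerivAt f (f' x) x) (hg : ∀ x, HasDerivAt g (f' x) x)
    (hfl : Tendsto f atBot (𝓝 l)) (hgl : Tendsto g atBot (𝓝 l)) : f = g := by
  have hconst : ∀ x, (f - g) x = (f - g) 0 := fun x ↦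
    is_const_of_deriv_eq_zero (fun y ↦ ((hf y).sub (hg y)).differentiableAt)
      (fun y ↦ by simpa using ((hf y).sub (hg y)).deriv) x 0
  have h0 : (f - g) 0 = 0 := tendsto_nhds_unique
    (tendsto_const_nhds.congr fun x ↦ (hconst x).symm) (by rw [← sub_self l]; exact hfl.sub hgl)
  ext x
  exact sub_eq_zero.1 ((hconst x).trans h0)

section PhiCorrelation

variable {g : ℝ → ℝ}

lemma hasDerivAt_integral_Phi_add_mul (hg : Integrable g) (b : ℝ) :
    HasDerivAt (fun b ↦ ∫ y, Phi (y + b) * g y) (∫ y, gaussianPDFReal 0 1 (y + b) * g y) b := by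
  refine (hasDerivAt_integral_of_dominated_loc_of_deriv_le (bound := fun y ↦ ‖g y‖)
    (F' := fun b y ↦ gaussianPDFReal 0 1 (y + b) * g y) univ_mem
    (Eventually.of_forall fun b ↦ (integrable_Phi_add_mul hg b).aestronglyMeasurable)
    (integrable_Phi_add_mul hg b) ?_ ?_ hg.norm ?_).2
  · exact (continuous_gaussianPDFReal_zero_one.comp
      (continuous_add_const b)).aestronglyMeasurable.mul hg.aestronglyMeasurable
  · refine ae_of_all _ fun y x _ ↦ ?_
    rw [norm_mul, norm_of_nonneg (gaussianPDFReal_nonneg 0 1 _)]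
    exact mul_le_of_le_one_left (norm_nonneg _) (gaussianPDFReal_zero_one_le_one _)
  · exact ae_of_all _ fun y x _ ↦ ((hasDerivAt_Phi (y + x)).comp_const_add y x).mul_const (g y)

lemma tendsto_integral_Phi_add_mul_atBot (hg : Integrable g) :
    Tendsto (fun b ↦ ∫ y, Phi (y + b) * g y) atBot (𝓝 0) := by
  have hlim : ∀ y, Tendsto (fun b ↦ Phi (y + b) * g y) atBot (𝓝 0) := fun y ↦ by
    simpa using
      (tendsto_Phi_atBot.comp (tendsto_atBot_add_const_left _ y tendsto_id)).mul_const (g y)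
  simpa using tendsto_integral_filter_of_dominated_convergence (fun y ↦ ‖g y‖)
    (Eventually.of_forall fun b ↦ (integrable_Phi_add_mul hg b).aestronglyMeasurable)
    (Eventually.of_forall fun b ↦ ae_of_all _ fun y ↦ by
      rw [norm_mul, norm_of_nonneg (Phi_nonneg _)]
      exact mul_le_of_le_one_left (norm_nonneg _) (Phi_le_one _))
    hg.norm (ae_of_all _ hlim)

end PhiCorrelation

section GaussianWeight

variable {a : ℝ}

lemma gaussianPDFReal_mul_exp_neg_mul_sub_sq (b y : ℝ) :
    gaussianPDFReal 0 1 y * exp (-a * (y - b) ^ 2) =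
      (√(2 * π))⁻¹ * (exp (-(1 / 2) * y ^ 2) * exp (-a * (y - b) ^ 2)) := by
  rw [gaussianPDFReal_zero_one, exp_neg_sq_div_two, mul_assoc]

lemma integrable_gaussianPDFReal_mul_exp_neg_mul_sub_sq (ha : 0 < 2 * a + 1) (b : ℝ) :
    Integrable fun y ↦ gaussianPDFReal 0 1 y * exp (-a * (y - b) ^ 2) := by
  simp_rw [gaussianPDFReal_mul_exp_neg_mul_sub_sq]
  exact (integrable_exp_neg_mul_sq_mul_exp_neg_mul_sub_sq (by linarith) b).const_mul _

lemma integral_gaussianPDFReal_mul_exp_neg_mul_sub_sq (ha : 0 < 2 * a + 1) (b : ℝ) :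
    ∫ y, gaussianPDFReal 0 1 y * exp (-a * (y - b) ^ 2) =
      (√(2 * a + 1))⁻¹ * exp (-a * b ^ 2 / (2 * a + 1)) := by
  have h₀ : 1 / 2 + a = (2 * a + 1) / 2 := by ring
  have hπ : π / (1 / 2 + a) = 2 * π / (2 * a + 1) := by rw [h₀]; field_simp
  have hexp : -(1 / 2 * a / (1 / 2 + a)) * b ^ 2 = -a * b ^ 2 / (2 * a + 1) := by
    rw [h₀]; field_simp
  simp_rw [gaussianPDFReal_mul_exp_neg_mul_sub_sq]
  rw [integral_const_mul, integral_exp_neg_mul_sq_mul_exp_neg_mul_sub_sq (by linarith), hπ, hexp,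
    sqrt_div (by positivity), ← mul_assoc, div_eq_mul_inv, inv_mul_cancel_left₀ (by positivity)]

lemma integral_Phi_mul_sub_mul_exp_neg_mul_sub_sq (ha : 0 < a) (b : ℝ) :
    ∫ y, Phi y * ((y - b) * exp (-a * (y - b) ^ 2)) =
      (2 * a)⁻¹ * ∫ y, gaussianPDFReal 0 1 y * exp (-a * (y - b) ^ 2) := by
  set v : ℝ → ℝ := fun y ↦ -(2 * a)⁻¹ * exp (-a * (y - b) ^ 2)
  have hv : ∀ y, HasDerivAt v ((y - b) * exp (-a * (y - b) ^ 2)) y := fun y ↦ by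
    refine ((((hasDerivAt_id' y).sub_const b).fun_pow 2).const_mul (-a)).exp.const_mul
      (-(2 * a)⁻¹) |>.congr_deriv ?_
    field_simp
    ring
  have hG := integrable_gaussianPDFReal_mul_exp_neg_mul_sub_sq (a := a) (by linarith) b
  have hibp := integral_mul_deriv_eq_deriv_mul_of_integrable (u := Phi) (v := v)
    (fun y _ ↦ hasDerivAt_Phi y) (fun y _ ↦ hv y)
    (integrable_Phi_mul ((integrable_mul_exp_neg_mul_sq ha).comp_sub_right b))
    ((hG.const_mul (-(2 * a)⁻¹)).congr (ae_of_all _ fun y ↦ by simp only [v, Pi.mul_apply]; ring))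
    (integrable_Phi_mul (((integrable_exp_neg_mul_sq ha).comp_sub_right b).const_mul _))
  simp only [v, mul_left_comm _ (-(2 * a)⁻¹), integral_const_mul] at hibp
  rw [hibp]
  ring

lemma integral_Phi_mul_exp_neg_mul_sub_sq (ha : 0 < a) (b : ℝ) :
    ∫ y, Phi y * exp (-a * (y - b) ^ 2) = √(π / a) * Phi (b * √(2 * a) / √(2 * a + 1)) := by
  have hshift : ∀ (F : ℝ → ℝ) b, ∫ y, F y * exp (-a * (y - b) ^ 2) =
      ∫ y, F (y + b) * exp (-a * y ^ 2) := fun F b ↦ by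
    rw [← integral_add_right_eq_self _ b]
    simp
  set k := √(2 * a) / √(2 * a + 1)
  have hk : 0 < k := by positivity
  have hderiv : ∀ x, √(π / a) * (gaussianPDFReal 0 1 (x * k) * k) =
      (√(2 * a + 1))⁻¹ * exp (-a * x ^ 2 / (2 * a + 1)) := fun x ↦ by
    have hsq : √(π / a) * √(2 * a) = √(2 * π) := by
      rw [← sqrt_mul (by positivity)]
      field_simp
    have hexp : -(x * k) ^ 2 / 2 = -a * x ^ 2 / (2 * a + 1) := by
      rw [mul_pow, div_pow, sq_sqrt (by positivity), sq_sqrt (by positivity)]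
      field_simp
    calc √(π / a) * (gaussianPDFReal 0 1 (x * k) * k)
        = √(π / a) * √(2 * a) * (√(2 * π))⁻¹ * ((√(2 * a + 1))⁻¹ * exp (-(x * k) ^ 2 / 2)) := by
          rw [gaussianPDFReal_zero_one, div_eq_mul_inv]
          ring
      _ = (√(2 * a + 1))⁻¹ * exp (-a * x ^ 2 / (2 * a + 1)) := by
          rw [hsq, hexp, mul_inv_cancel₀ (by positivity), one_mul]
  rw [hshift, mul_div_assoc]
  refine congrFun (eq_of_hasDerivAt_of_tendsto_atBot (g := fun b ↦ √(π / a) * Phi (b * k))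
    (f' := fun b ↦ (√(2 * a + 1))⁻¹ * exp (-a * b ^ 2 / (2 * a + 1))) (fun b ↦ ?_) (fun b ↦ ?_)
    (tendsto_integral_Phi_add_mul_atBot (integrable_exp_neg_mul_sq ha)) ?_) b
  · have := hasDerivAt_integral_Phi_add_mul (integrable_exp_neg_mul_sq ha) b
    rwa [← hshift, integral_gaussianPDFReal_mul_exp_neg_mul_sub_sq (by linarith)] at this
  · exact (((hasDerivAt_Phi (b * k)).comp b (hasDerivAt_mul_const k)).const_mul _).congr_deriv
      (hderiv b)
  · simpa using (tendsto_Phi_atBot.comp (tendsto_id.atBot_mul_const hk)).const_mul (√(π / a))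

lemma integral_mul_Phi_add_gaussianPDFReal_mul_exp_neg_mul_sub_sq (ha : 0 < a) (b : ℝ) :
    ∫ y, (y * Phi y + gaussianPDFReal 0 1 y) * exp (-a * (y - b) ^ 2) =
      b * (√(π / a) * Phi (b * √(2 * a) / √(2 * a + 1))) +
        (1 + (2 * a)⁻¹) * ((√(2 * a + 1))⁻¹ * exp (-a * b ^ 2 / (2 * a + 1))) := by
  have hsplit : ∀ y, (y * Phi y + gaussianPDFReal 0 1 y) * exp (-a * (y - b) ^ 2) =
      b * (Phi y * exp (-a * (y - b) ^ 2)) + (Phi y * ((y - b) * exp (-a * (y - b) ^ 2)) +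
        gaussianPDFReal 0 1 y * exp (-a * (y - b) ^ 2)) := fun y ↦ by ring
  have hPhi := integrable_Phi_mul ((integrable_exp_neg_mul_sq ha).comp_sub_right b)
  have hPhi' := integrable_Phi_mul ((integrable_mul_exp_neg_mul_sq ha).comp_sub_right b)
  have hG := integrable_gaussianPDFReal_mul_exp_neg_mul_sub_sq (a := a) (by linarith) b
  simp_rw [hsplit]
  rw [integral_add (hPhi.const_mul b) (hPhi'.fun_add hG), integral_add hPhi' hG,
    integral_const_mul, integral_Phi_mul_exp_neg_mul_sub_sq ha,
    integral_Phi_mul_sub_mul_exp_neg_mul_sub_sq ha,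
    integral_gaussianPDFReal_mul_exp_neg_mul_sub_sq (by linarith)]
  ring

end GaussianWeight

theorem stmt3 (a b : ℝ) (ha : 0 < a) :
    (1 / (2 * Real.sqrt Real.pi)) *
        ∫ l2 : ℝ, ∫ l1 in Set.Iic l2,
          Real.exp (-(l1 ^ 2) / 2) * Real.exp (-a * (l2 - b) ^ 2) * (l2 - l1) =
      Real.sqrt (4 * a + 2) / (4 * a) * Real.exp (-a * b ^ 2 / (2 * a + 1)) +
        b * Real.sqrt Real.pi / Real.sqrt (2 * a) *
          Phi (b * Real.sqrt (2 * a) / Real.sqrt (2 * a + 1)) := by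
  have hinner : ∀ y, ∫ t in Iic y, exp (-(t ^ 2) / 2) * exp (-a * (y - b) ^ 2) * (y - t) =
      √(2 * π) * ((y * Phi y + gaussianPDFReal 0 1 y) * exp (-a * (y - b) ^ 2)) := fun y ↦ by
    simp_rw [mul_right_comm _ (exp (-a * (y - b) ^ 2))]
    rw [integral_mul_const, integral_Iic_exp_neg_sq_div_two_mul_sub]
    ring
  simp_rw [hinner]
  rw [integral_const_mul, integral_mul_Phi_add_gaussianPDFReal_mul_exp_neg_mul_sub_sq ha,
    sqrt_mul two_pos.le, sqrt_div pi_pos.le, sqrt_mul two_pos.le,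
    show 4 * a + 2 = 2 * (2 * a + 1) by ring, sqrt_mul two_pos.le]
  have h2 : √2 ^ 2 = 2 := sq_sqrt two_pos.le
  have h2a : √(2 * a + 1) ^ 2 = 2 * a + 1 := sq_sqrt (by positivity)
  have : √π ≠ 0 := by positivity
  have : √a ≠ 0 := by positivity
  have : √(2 * a + 1) ≠ 0 := by positivity
  field_simp
  rw [h2]
  linear_combination (-8 * √a * exp (-(b ^ 2 * a / (2 * a + 1)))) * h2a
end

section
/- One has (1/(√2 π)) ∫_{λ₁≤λ₂≤λ₃} e^{-λ₁²/2} e^{-λ₂²/2} e^{-λ₃²} (λ₂-λ₁)(λ₃-λ₁)(λ₃-λ₂) dλ₁ dλ₂ dλ₃ = 1/√6. Equivalently, E^{3}_{GOE}{ exp(-λ₃²/2) } = 1/√6, where λ₃ is the largest eigenvalue of a 3×3 GOE matrix. -/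
/-!
Write φ(x) = e^{-x²/2}, G(t) = ∫_{-∞}^t φ and H(t) = ∫_{-∞}^t φ², i.e. `gaussianIic (1/2)` and
`gaussianIic 1`. Since φ' = -xφ, the λ₁- and λ₂-integrals have explicit primitives built from
polynomials, φ, G and H, and the iterated integral collapses to
∫ e^{-t²} (φ G + (2t² - 1) H + t φ²) dt. The reflection identities G(t) + G(-t) = √(2π) and
H(t) + H(-t) = √π let G and H be replaced by half these constants against the even weights
e^{-3t²/2} and (2t² - 1) e^{-t²}: the first term gives π/√3, the second vanishes because
(2t² - 1) e^{-t²} is the derivative of -t e^{-t²}, and the third is odd.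
-/

open MeasureTheory Real Set Filter Topology Polynomial

section PolynomialGaussian

variable {b : ℝ}

theorem integrable_eval_mul_exp_neg_mul_sq (hb : 0 < b) (p : ℝ[X]) :
    Integrable fun x => p.eval x * exp (-b * x ^ 2) := by
  induction p using Polynomial.induction_on' with
  | add p q hp hq =>
    simp only [eval_add, add_mul]
    exact hp.add hq
  | monomial n a =>
    have h := integrable_rpow_mul_exp_neg_mul_sq hb (s := n)
      (by linarith [n.cast_nonneg (α := ℝ)])
    simp only [rpow_natCast] at h
    simpa only [eval_monomial, mul_assoc] using h.const_mul a

theorem tendsto_eval_mul_exp_neg_mul_sq_cocompact (hb : 0 < b) (p : ℝ[X]) :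
    Tendsto (fun x => p.eval x * exp (-b * x ^ 2)) (cocompact ℝ) (𝓝 0) := by
  induction p using Polynomial.induction_on' with
  | add p q hp hq => simpa only [eval_add, add_mul, add_zero] using hp.add hq
  | monomial n a =>
    have h := tendsto_rpow_abs_mul_exp_neg_mul_sq_cocompact hb n
    simp only [rpow_natCast] at h
    have h' : Tendsto (fun x : ℝ => x ^ n * exp (-b * x ^ 2)) (cocompact ℝ) (𝓝 0) := by
      refine tendsto_zero_iff_norm_tendsto_zero.2 (h.congr fun x => ?_)
      rw [norm_mul, norm_pow, Real.norm_eq_abs, Real.norm_of_nonneg (exp_pos _).le]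
    simpa only [eval_monomial, mul_assoc, mul_zero] using h'.const_mul a

end PolynomialGaussian

section IicPrimitive

variable {E : Type*} [NormedAddCommGroup E] [NormedSpace ℝ E] {f : ℝ → E}

theorem hasDerivAt_integral_Iic [CompleteSpace E] (hf : Integrable f) (hc : Continuous f)
    (a : ℝ) : HasDerivAt (fun t => ∫ x in Iic t, f x) (f a) a := by
  have h : (fun t => ∫ x in Iic t, f x) =
      fun t => (∫ x in Iic 0, f x) + ∫ x in (0 : ℝ)..t, f x := by
    funext t
    rw [← intervalIntegral.integral_Iic_sub_Iic hf.integrableOn hf.integrableOn, add_sub_cancel]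
  rw [h]
  exact (intervalIntegral.integral_hasDerivAt_right (hc.intervalIntegrable 0 a)
    (hc.stronglyMeasurableAtFilter volume _) hc.continuousAt).const_add _

theorem tendsto_integral_Iic_atBot (hf : Integrable f) :
    Tendsto (fun t => ∫ x in Iic t, f x) atBot (𝓝 0) := by
  have h := (intervalIntegral_tendsto_integral_Iic 0 hf.integrableOn tendsto_id).const_sub
    (∫ x in Iic 0, f x)
  rw [sub_self] at h
  refine h.congr fun t => ?_
  rw [← intervalIntegral.integral_Iic_sub_Iic hf.integrableOn hf.integrableOn, sub_sub_cancel, id]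

theorem integral_Iic_add_integral_Iic_neg (hf : Integrable f) (heven : f.Even) (t : ℝ) :
    (∫ x in Iic t, f x) + ∫ x in Iic (-t), f x = ∫ x, f x := by
  have h := integral_comp_neg_Ioi t f
  simp only [heven _] at h
  rw [← h, intervalIntegral.integral_Iic_add_Ioi hf.integrableOn hf.integrableOn]

end IicPrimitive

theorem Integrable.mul_integral_Iic {g f : ℝ → ℝ} (hg : Integrable g) (hf : Integrable f)
    (hc : Continuous f) : Integrable fun t => g t * ∫ x in Iic t, f x :=
  hg.mul_bdd (continuous_iff_continuousAt.2 fun t =>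
      (hasDerivAt_integral_Iic hf hc t).continuousAt).aestronglyMeasurable
    (ae_of_all _ fun _ => (norm_integral_le_integral_norm _).trans
      (setIntegral_le_integral hf.norm (ae_of_all _ fun _ => norm_nonneg _)))

section Reflection

variable {G : Type*} [MeasurableSpace G] [AddGroup G] [MeasurableNeg G] {μ : Measure G}
  [μ.IsNegInvariant]

theorem integral_mul_eq_half_mul_integral {g F : G → ℝ} {C : ℝ} (hg : g.Even)
    (hF : ∀ x, F x + F (-x) = C) (hgF : Integrable (fun x => g x * F x) μ) :
    ∫ x, g x * F x ∂μ = C / 2 * ∫ x, g x ∂μ := by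
  have hrefl : ∫ x, g x * F (-x) ∂μ = ∫ x, g x * F x ∂μ := by
    simpa only [hg _] using integral_neg_eq_self (fun x => g x * F x) μ
  have hsum : ∫ x, g x * F x ∂μ + ∫ x, g x * F (-x) ∂μ = C * ∫ x, g x ∂μ := by
    rw [← integral_add hgF (by simpa only [hg _] using hgF.comp_neg), ← integral_const_mul]
    congr 1 with x
    rw [← mul_add, hF, mul_comm]
  linarith

end Reflection

theorem hasDerivAt_exp_neg_mul_sq (b x : ℝ) :
    HasDerivAt (fun x => exp (-b * x ^ 2)) (-(2 * b * x) * exp (-b * x ^ 2)) x := by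
  convert ((hasDerivAt_pow 2 x).const_mul (-b)).exp using 1
  push_cast
  ring

theorem exp_neg_mul_sq_mul_exp_neg_mul_sq (b c x : ℝ) :
    exp (-b * x ^ 2) * exp (-c * x ^ 2) = exp (-(b + c) * x ^ 2) := by
  rw [← exp_add]
  ring_nf

noncomputable def gaussianIic (b t : ℝ) : ℝ := ∫ x in Iic t, exp (-b * x ^ 2)

section GaussianIic

variable {b : ℝ}

theorem hasDerivAt_gaussianIic (hb : 0 < b) (t : ℝ) :
    HasDerivAt (gaussianIic b) (exp (-b * t ^ 2)) t :=
  hasDerivAt_integral_Iic (integrable_exp_neg_mul_sq hb) (by fun_prop) t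

theorem tendsto_gaussianIic_atBot (hb : 0 < b) : Tendsto (gaussianIic b) atBot (𝓝 0) :=
  tendsto_integral_Iic_atBot (integrable_exp_neg_mul_sq hb)

theorem gaussianIic_add_gaussianIic_neg (hb : 0 < b) (t : ℝ) :
    gaussianIic b t + gaussianIic b (-t) = √(π / b) := by
  rw [← integral_gaussian]
  exact integral_Iic_add_integral_Iic_neg (integrable_exp_neg_mul_sq hb) (fun x => by simp) t

theorem Integrable.mul_gaussianIic {g : ℝ → ℝ} (hg : Integrable g) (hb : 0 < b) :
    Integrable fun t => g t * gaussianIic b t :=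
  Integrable.mul_integral_Iic hg (integrable_exp_neg_mul_sq hb) (by fun_prop)

end GaussianIic

theorem integral_Iic_exp_neg_half_sq_mul_sub_mul_sub (b c : ℝ) :
    ∫ x in Iic b, exp (-(1 / 2) * x ^ 2) * ((b - x) * (c - x)) =
      (1 + b * c) * gaussianIic (1 / 2) b + c * exp (-(1 / 2) * b ^ 2) := by
  have hderiv : ∀ x ∈ Iic b, HasDerivAt
      (fun x => (b + c - x) * exp (-(1 / 2) * x ^ 2) + (1 + b * c) * gaussianIic (1 / 2) x)
      (exp (-(1 / 2) * x ^ 2) * ((b - x) * (c - x))) x := by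
    intro x _
    refine ((((hasDerivAt_id' x).const_sub (b + c)).mul (hasDerivAt_exp_neg_mul_sq (1 / 2) x)).add
      ((hasDerivAt_gaussianIic one_half_pos x).const_mul (1 + b * c))).congr_deriv ?_
    ring
  have hint : Integrable fun x => exp (-(1 / 2) * x ^ 2) * ((b - x) * (c - x)) :=
    (integrable_eval_mul_exp_neg_mul_sq one_half_pos ((C b - X) * (C c - X))).congr
      (ae_of_all _ fun x => by simp only [eval_mul, eval_sub, eval_C, eval_X]; ring)
  have hlim : Tendsto
      (fun x => (b + c - x) * exp (-(1 / 2) * x ^ 2) + (1 + b * c) * gaussianIic (1 / 2) x)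
      atBot (𝓝 0) := by
    have h := (((tendsto_eval_mul_exp_neg_mul_sq_cocompact one_half_pos (C (b + c) - X)).mono_left
      atBot_le_cocompact).add ((tendsto_gaussianIic_atBot one_half_pos).const_mul (1 + b * c)))
    simpa only [eval_sub, eval_C, eval_X, mul_zero, add_zero] using h
  rw [integral_Iic_of_hasDerivAt_of_tendsto' hderiv hint.integrableOn hlim]
  ring

theorem integral_Iic_exp_neg_half_sq_mul_sub_mul_gaussianIic (c : ℝ) :
    ∫ y in Iic c, exp (-(1 / 2) * y ^ 2) * (c - y) *
        ((1 + y * c) * gaussianIic (1 / 2) y + c * exp (-(1 / 2) * y ^ 2)) =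
      exp (-(1 / 2) * c ^ 2) * gaussianIic (1 / 2) c + (2 * c ^ 2 - 1) * gaussianIic 1 c +
        c * exp (-1 * c ^ 2) := by
  have hsq : ∀ y : ℝ, exp (-(1 / 2) * y ^ 2) * exp (-(1 / 2) * y ^ 2) = exp (-1 * y ^ 2) :=
    fun y => by rw [exp_neg_mul_sq_mul_exp_neg_mul_sq]; norm_num
  have hderiv : ∀ y ∈ Iic c, HasDerivAt
      (fun y => (2 * c ^ 2 - 1) * gaussianIic 1 y +
        (c * y - (c ^ 2 - 1)) * (exp (-(1 / 2) * y ^ 2) * gaussianIic (1 / 2) y) +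
          c * exp (-1 * y ^ 2))
      (exp (-(1 / 2) * y ^ 2) * (c - y) *
        ((1 + y * c) * gaussianIic (1 / 2) y + c * exp (-(1 / 2) * y ^ 2))) y := by
    intro y _
    refine ((((hasDerivAt_gaussianIic one_pos y).const_mul (2 * c ^ 2 - 1)).add
      ((((hasDerivAt_id' y).const_mul c).sub_const (c ^ 2 - 1)).mul
        ((hasDerivAt_exp_neg_mul_sq (1 / 2) y).mul (hasDerivAt_gaussianIic one_half_pos y)))).add
      ((hasDerivAt_exp_neg_mul_sq 1 y).const_mul c)).congr_deriv ?_
    simp only [Pi.mul_apply, ← hsq]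
    ring
  have hint : Integrable fun y => exp (-(1 / 2) * y ^ 2) * (c - y) *
      ((1 + y * c) * gaussianIic (1 / 2) y + c * exp (-(1 / 2) * y ^ 2)) := by
    have h1 := Integrable.mul_gaussianIic
      (integrable_eval_mul_exp_neg_mul_sq one_half_pos ((C c - X) * (1 + X * C c))) one_half_pos
    have h2 := integrable_eval_mul_exp_neg_mul_sq one_pos (C c * (C c - X))
    refine (h1.add h2).congr (ae_of_all _ fun y => ?_)
    simp only [Pi.add_apply, eval_mul, eval_sub, eval_add, eval_one, eval_C, eval_X, ← hsq]
    ring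
  have hlim : Tendsto
      (fun y => (2 * c ^ 2 - 1) * gaussianIic 1 y +
        (c * y - (c ^ 2 - 1)) * (exp (-(1 / 2) * y ^ 2) * gaussianIic (1 / 2) y) +
          c * exp (-1 * y ^ 2))
      atBot (𝓝 0) := by
    have h1 := (tendsto_gaussianIic_atBot one_pos).const_mul (2 * c ^ 2 - 1)
    have h2 := ((tendsto_eval_mul_exp_neg_mul_sq_cocompact one_half_pos
      (C c * X - C (c ^ 2 - 1))).mono_left atBot_le_cocompact).mul
        (tendsto_gaussianIic_atBot one_half_pos)
    have h3 := (tendsto_eval_mul_exp_neg_mul_sq_cocompact one_pos (C c)).mono_left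
      atBot_le_cocompact
    simpa only [eval_sub, eval_mul, eval_C, eval_X, mul_assoc, mul_zero, add_zero]
      using (h1.add h2).add h3
  rw [integral_Iic_of_hasDerivAt_of_tendsto' hderiv hint.integrableOn hlim]
  ring

theorem integrable_two_mul_sq_sub_one_mul_exp_neg_sq :
    Integrable fun t => (2 * t ^ 2 - 1) * exp (-1 * t ^ 2) := by
  have h := integrable_eval_mul_exp_neg_mul_sq one_pos (2 * X ^ 2 - 1)
  simp only [eval_sub, eval_mul, eval_pow, eval_X, eval_one, eval_ofNat] at h
  exact h

theorem integral_two_mul_sq_sub_one_mul_exp_neg_sq :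
    ∫ t, (2 * t ^ 2 - 1) * exp (-1 * t ^ 2) = 0 := by
  refine integral_eq_zero_of_hasDerivAt_of_integrable (f := fun t => -t * exp (-1 * t ^ 2))
    (fun t => ?_) ?_ ?_
  · exact ((hasDerivAt_neg t).mul (hasDerivAt_exp_neg_mul_sq 1 t)).congr_deriv (by ring)
  · exact integrable_two_mul_sq_sub_one_mul_exp_neg_sq
  · simpa only [eval_neg, eval_X] using integrable_eval_mul_exp_neg_mul_sq one_pos (-X)

theorem integral_exp_neg_sq_mul_gaussianIic_combination :
    ∫ t, exp (-1 * t ^ 2) * (exp (-(1 / 2) * t ^ 2) * gaussianIic (1 / 2) t +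
      (2 * t ^ 2 - 1) * gaussianIic 1 t + t * exp (-1 * t ^ 2)) = π / √3 := by
  have hA : Integrable fun t => exp (-(3 / 2) * t ^ 2) * gaussianIic (1 / 2) t :=
    Integrable.mul_gaussianIic (integrable_exp_neg_mul_sq (by norm_num)) one_half_pos
  have hB : Integrable fun t => (2 * t ^ 2 - 1) * exp (-1 * t ^ 2) * gaussianIic 1 t :=
    Integrable.mul_gaussianIic integrable_two_mul_sq_sub_one_mul_exp_neg_sq one_pos
  have hC : Integrable fun t => exp (-2 * t ^ 2) * t := by
    simpa only [eval_X, mul_comm] using integrable_eval_mul_exp_neg_mul_sq two_pos X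
  have A : ∫ t, exp (-(3 / 2) * t ^ 2) * gaussianIic (1 / 2) t = π / √3 := by
    rw [integral_mul_eq_half_mul_integral (fun t => by simp)
      (gaussianIic_add_gaussianIic_neg one_half_pos) hA, integral_gaussian, div_mul_eq_mul_div,
      ← sqrt_mul (by positivity), show π / (1 / 2) * (π / (3 / 2)) = (2 * π) ^ 2 / 3 by ring,
      sqrt_div' _ (by norm_num), sqrt_sq (by positivity)]
    ring
  have B : ∫ t, (2 * t ^ 2 - 1) * exp (-1 * t ^ 2) * gaussianIic 1 t = 0 := by
    rw [integral_mul_eq_half_mul_integral (fun t => by simp)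
      (gaussianIic_add_gaussianIic_neg one_pos) hB, integral_two_mul_sq_sub_one_mul_exp_neg_sq,
      mul_zero]
  have C : ∫ t, exp (-2 * t ^ 2) * t = 0 := by
    rw [integral_mul_eq_half_mul_integral (F := fun t => t) (C := 0) (fun t => by simp)
      (fun t => by simp) hC, zero_div, zero_mul]
  calc _ = ∫ t, exp (-(3 / 2) * t ^ 2) * gaussianIic (1 / 2) t +
        (2 * t ^ 2 - 1) * exp (-1 * t ^ 2) * gaussianIic 1 t + exp (-2 * t ^ 2) * t := by
        congr 1 with t
        have h3 : exp (-(3 / 2) * t ^ 2) = exp (-1 * t ^ 2) * exp (-(1 / 2) * t ^ 2) := by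
          rw [exp_neg_mul_sq_mul_exp_neg_mul_sq]; norm_num
        have h2 : exp (-2 * t ^ 2) = exp (-1 * t ^ 2) * exp (-1 * t ^ 2) := by
          rw [exp_neg_mul_sq_mul_exp_neg_mul_sq]; norm_num
        rw [h3, h2]
        ring
    _ = π / √3 := by
      have hAB : Integrable fun t => exp (-(3 / 2) * t ^ 2) * gaussianIic (1 / 2) t +
          (2 * t ^ 2 - 1) * exp (-1 * t ^ 2) * gaussianIic 1 t := hA.add hB
      rw [integral_add hAB hC, integral_add hA hB, A, B, C, add_zero, add_zero]

theorem stmt9 :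
    (1 / (Real.sqrt 2 * Real.pi)) *
        ∫ l3 : ℝ, ∫ l2 in Set.Iic l3, ∫ l1 in Set.Iic l2,
          Real.exp (-(l1 ^ 2) / 2) * Real.exp (-(l2 ^ 2) / 2) * Real.exp (-(l3 ^ 2)) *
            ((l2 - l1) * (l3 - l1) * (l3 - l2)) =
      1 / Real.sqrt 6 := by
  have hφ : ∀ x : ℝ, exp (-(x ^ 2) / 2) = exp (-(1 / 2) * x ^ 2) := fun x => by ring_nf
  have hψ : ∀ x : ℝ, exp (-(x ^ 2)) = exp (-1 * x ^ 2) := fun x => by ring_nf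
  have inner : ∀ l3 l2 : ℝ, ∫ l1 in Iic l2, exp (-(1 / 2) * l1 ^ 2) * exp (-(1 / 2) * l2 ^ 2) *
      exp (-1 * l3 ^ 2) * ((l2 - l1) * (l3 - l1) * (l3 - l2)) =
      exp (-1 * l3 ^ 2) * (exp (-(1 / 2) * l2 ^ 2) * (l3 - l2) *
        ((1 + l2 * l3) * gaussianIic (1 / 2) l2 + l3 * exp (-(1 / 2) * l2 ^ 2))) := by
    intro l3 l2
    rw [← integral_Iic_exp_neg_half_sq_mul_sub_mul_sub, ← integral_const_mul,
      ← integral_const_mul]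
    congr 1 with l1
    ring
  simp only [hφ, hψ, inner, integral_const_mul,
    integral_Iic_exp_neg_half_sq_mul_sub_mul_gaussianIic,
    integral_exp_neg_sq_mul_gaussianIic_combination]
  rw [show (6 : ℝ) = 2 * 3 by norm_num, sqrt_mul zero_le_two]
  field_simp
end
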